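/- arXiv:2305.18534 — 2 statements merged into one kernel-verified Lean document; each statement's English description precedes it below -/
import Mathlib

section
/- Let C be a connected subgraph of G with vertex set V_C and edge set E_C such that V_C contains at least one boundary vertex. Then for every set of defects S ⊆ V_bulk there exists a set D ⊆ E_C with σ(D) = S ∩ V_C. -/
/-!
The syndrome map turns symmetric differences of edge sets into symmetric differences of
syndromes, so it suffices to produce, for each bulk vertex `v` of `C`, an edge set of `C`
with syndrome `{v}`. Walking inside `C` from `v` to a boundary vertex `b` and toggling the
edges along the way flips parity only at `v` and `b`, and `b` carries no syndrome.
-/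

open scoped symmDiff

/-- The syndrome of a set `F` of edges: the set of bulk vertices incident to an
odd number of edges of `F`. -/
def syndrome {V : Type*} (Vbulk : Set V) (F : Set (Sym2 V)) : Set V :=
  {v ∈ Vbulk | Odd {e ∈ F | v ∈ e}.ncard}

namespace Set

variable {α : Type*} {s t : Set α}

theorem ncard_symmDiff_add_two_mul_ncard_inter (hs : s.Finite) (ht : t.Finite) :
    (s ∆ t).ncard + 2 * (s ∩ t).ncard = s.ncard + t.ncard := by
  have hsub : s ∩ t ⊆ s ∪ t := inter_subset_left.trans subset_union_left
  have hdiff := ncard_sdiff_add_ncard_of_subset hsub (hs.union ht)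
  have hunion := ncard_union_add_ncard_inter s t hs ht
  rw [symmDiff_eq_sup_sdiff_inf]
  change ((s ∪ t) \ (s ∩ t)).ncard + _ = _
  omega

theorem odd_ncard_symmDiff_iff (hs : s.Finite) (ht : t.Finite) :
    Odd (s ∆ t).ncard ↔ ¬(Odd s.ncard ↔ Odd t.ncard) := by
  have h := ncard_symmDiff_add_two_mul_ncard_inter hs ht
  simp only [Nat.odd_iff]
  omega

end Set

section Syndrome

variable {V : Type*} (Vbulk : Set V)

theorem syndrome_empty : syndrome Vbulk (∅ : Set (Sym2 V)) = ∅ := by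
  ext v
  simp [syndrome]

theorem syndrome_symmDiff [Finite V] (D₁ D₂ : Set (Sym2 V)) :
    syndrome Vbulk (D₁ ∆ D₂) = syndrome Vbulk D₁ ∆ syndrome Vbulk D₂ := by
  ext v
  have hinc : {e ∈ D₁ ∆ D₂ | v ∈ e} = {e ∈ D₁ | v ∈ e} ∆ {e ∈ D₂ | v ∈ e} := by
    ext e
    simp only [Set.mem_symmDiff, Set.mem_ofPred_eq]
    tauto
  rw [Set.mem_symmDiff, syndrome, syndrome, syndrome]
  simp only [Set.mem_sep_iff]
  rw [hinc, Set.odd_ncard_symmDiff_iff (Set.toFinite _) (Set.toFinite _)]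
  tauto

theorem syndrome_singleton_sym2 {a b : V} (hab : a ≠ b) :
    syndrome Vbulk {s(a, b)} = ({a} ∆ {b}) ∩ Vbulk := by
  ext v
  have hsymm : v ∈ ({a} ∆ {b} : Set V) ↔ v ∈ s(a, b) := by
    simp only [Set.mem_symmDiff, Set.mem_singleton_iff, Sym2.mem_iff]
    grind
  rw [Set.mem_inter_iff, hsymm, and_comm]
  by_cases hv : v ∈ s(a, b)
  · rw [syndrome, Set.mem_sep_iff, Set.sep_eq_self_iff_mem_true.2 (by simpa using hv),
      Set.ncard_singleton]
    simp [hv]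
  · rw [syndrome, Set.mem_sep_iff, Set.sep_eq_empty_iff_mem_false.2 (by simpa using hv),
      Set.ncard_empty]
    simp [hv]

theorem SimpleGraph.Reachable.exists_syndrome_eq [Finite V] {H : SimpleGraph V} {u v : V}
    (h : H.Reachable u v) : ∃ D ⊆ H.edgeSet, syndrome Vbulk D = ({u} ∆ {v}) ∩ Vbulk := by
  obtain ⟨w⟩ := h
  induction w with
  | nil => exact ⟨∅, Set.empty_subset _, by simp [syndrome_empty]⟩
  | @cons u w v hadj _ ih =>
    obtain ⟨D, hD, hsyn⟩ := ih
    refine ⟨{s(u, w)} ∆ D, Set.symmDiff_subset_union.trans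
      (Set.union_subset (Set.singleton_subset_iff.2 hadj) hD), ?_⟩
    rw [syndrome_symmDiff, hsyn, syndrome_singleton_sym2 Vbulk hadj.ne,
      ← Set.inter_symmDiff_distrib_right, symmDiff_assoc, symmDiff_symmDiff_cancel_left]

theorem exists_syndrome_eq_of_forall_singleton [Finite V] {E : Set (Sym2 V)} {T : Set V}
    (h : ∀ v ∈ T, ∃ D ⊆ E, syndrome Vbulk D = {v}) : ∃ D ⊆ E, syndrome Vbulk D = T := by
  induction T, T.toFinite using Set.Finite.induction_on with
  | empty => exact ⟨∅, Set.empty_subset _, syndrome_empty Vbulk⟩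
  | @insert v T hvT _ ih =>
    obtain ⟨D, hD, hsyn⟩ := ih fun x hx => h x (Set.mem_insert_of_mem v hx)
    obtain ⟨Dv, hDv, hsynv⟩ := h v (Set.mem_insert v T)
    refine ⟨Dv ∆ D, Set.symmDiff_subset_union.trans (Set.union_subset hDv hD), ?_⟩
    rw [syndrome_symmDiff, hsynv, hsyn, (Set.disjoint_singleton_left.2 hvT).symmDiff_eq_sup]
    exact (Set.insert_eq v T).symm

end Syndrome

theorem correction_of_boundary_general {V : Type*} [Fintype V]
    (G : SimpleGraph V) (Vbulk Vboundary : Set V)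
    (hdisj : Disjoint Vbulk Vboundary)
    (C : G.Subgraph) (hconn : C.Connected)
    (hbd : (C.verts ∩ Vboundary).Nonempty) :
    ∀ S ⊆ Vbulk, ∃ D ⊆ C.edgeSet, syndrome Vbulk D = S ∩ C.verts := by
  intro S hS
  obtain ⟨b, hbC, hbB⟩ := hbd
  have hb : b ∉ Vbulk := Set.disjoint_right.1 hdisj hbB
  apply exists_syndrome_eq_of_forall_singleton
  rintro v ⟨hvS, hvC⟩
  have hreach : C.spanningCoe.Reachable v b :=
    (hconn ⟨v, hvC⟩ ⟨b, hbC⟩).map C.coeEmbeddingSpanningCoe.toHom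
  obtain ⟨D, hD, hsyn⟩ := hreach.exists_syndrome_eq Vbulk
  refine ⟨D, C.edgeSet_spanningCoe ▸ hD, ?_⟩
  rw [hsyn, Set.inter_symmDiff_distrib_right, Set.singleton_inter_of_mem (hS hvS),
    Set.singleton_inter_eq_empty.2 hb]
  exact symmDiff_bot _

/-- A connected cluster touching a boundary admits an internal correction for
every set of defects. -/
theorem correction_of_boundary {V : Type*} [Fintype V]
    (G : SimpleGraph V) (Vbulk Vboundary : Set V)
    (hdisj : Disjoint Vbulk Vboundary) (hcover : Vbulk ∪ Vboundary = Set.univ)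
    (C : G.Subgraph) (hconn : C.Connected)
    (hbd : (C.verts ∩ Vboundary).Nonempty) :
    ∀ S ⊆ Vbulk, ∃ D ⊆ C.edgeSet, syndrome Vbulk D = S ∩ C.verts :=
  correction_of_boundary_general G Vbulk Vboundary hdisj C hconn hbd
end

section
/- Let C be a connected subgraph of G with vertex set V_C and edge set E_C, and let S ⊆ V_bulk be a set of defects. Then C is active — meaning there exists no D ⊆ E_C with σ(D) = S ∩ V_C — if and only if |S ∩ V_C| is odd and V_C contains no boundary vertex. -/
open scoped symmDiff

set_option linter.unusedSectionVars false

section aux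

variable {V : Type*} [Fintype V]

/-- All vertices incident to an odd number of edges of `D`. -/
def oddSet (D : Set (Sym2 V)) : Set V := {v | Odd {e ∈ D | v ∈ e}.ncard}

lemma ncard_symmDiff_mod {α : Type*} [Finite α] (A B : Set α) :
    (A ∆ B).ncard % 2 = (A.ncard + B.ncard) % 2 := by
  have h1 : ((A ∪ B) \ (A ∩ B)).ncard + (A ∩ B).ncard = (A ∪ B).ncard :=
    Set.ncard_diff_add_ncard_of_subset
      (Set.inter_subset_left.trans Set.subset_union_left)
  have h2 : (A ∪ B).ncard + (A ∩ B).ncard = A.ncard + B.ncard :=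
    Set.ncard_union_add_ncard_inter A B
  rw [symmDiff_eq_sup_sdiff_inf]
  have h3 : ((A ⊔ B) \ (A ⊓ B) : Set α) = (A ∪ B) \ (A ∩ B) := rfl
  rw [h3]
  omega

lemma oddSet_empty : oddSet (∅ : Set (Sym2 V)) = ∅ := by
  ext v; simp [oddSet]

lemma oddSet_symmDiff (D D' : Set (Sym2 V)) :
    oddSet (D ∆ D') = oddSet D ∆ oddSet D' := by
  ext v
  have hset : {e ∈ D ∆ D' | v ∈ e} = {e ∈ D | v ∈ e} ∆ {e ∈ D' | v ∈ e} := by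
    ext e; simp [Set.mem_symmDiff]; tauto
  have hmod := ncard_symmDiff_mod {e ∈ D | v ∈ e} {e ∈ D' | v ∈ e}
  have hL : v ∈ oddSet (D ∆ D') ↔ Odd ({e ∈ D | v ∈ e} ∆ {e ∈ D' | v ∈ e}).ncard := by
    rw [oddSet, Set.mem_setOf_eq, hset]
  rw [hL, Set.mem_symmDiff]
  simp only [oddSet, Set.mem_setOf_eq]
  rw [Nat.odd_iff, Nat.odd_iff, Nat.odd_iff, hmod]
  omega

lemma oddSet_single {a b : V} (hab : a ≠ b) :
    oddSet ({s(a, b)} : Set (Sym2 V)) = {a, b} := by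
  ext v
  rw [oddSet, Set.mem_setOf_eq]
  by_cases hv : v ∈ s(a, b)
  · have h : {e ∈ ({s(a,b)} : Set (Sym2 V)) | v ∈ e} = {s(a,b)} := by
      ext e
      simp only [Set.mem_setOf_eq, Set.mem_singleton_iff, and_iff_left_iff_imp]
      rintro rfl; exact hv
    rw [h, Set.ncard_singleton]
    simp only [odd_one, true_iff, Set.mem_insert_iff, Set.mem_singleton_iff]
    exact Sym2.mem_iff.mp hv
  · have h : {e ∈ ({s(a,b)} : Set (Sym2 V)) | v ∈ e} = ∅ := by
      ext e
      simp only [Set.mem_setOf_eq, Set.mem_singleton_iff, Set.mem_empty_iff_false,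
        iff_false, not_and]
      rintro rfl; exact hv
    rw [h, Set.ncard_empty]
    constructor
    · intro h0; simp at h0
    · intro hmem
      rcases Set.mem_insert_iff.mp hmem with rfl | h'
      · exact absurd (by simp : v ∈ s(v, b)) hv
      · rw [Set.mem_singleton_iff] at h'; subst h'
        exact absurd (by simp : v ∈ s(a, v)) hv

lemma oddSet_singleton_symmDiff (a : V) : ({a} : Set V) ∆ {a} = ∅ := symmDiff_self _

variable {G : SimpleGraph V} {C : G.Subgraph}

/-- From a walk in the coercion of the subgraph, build an edge set whose odd-incidence
set is the symmetric difference of the endpoints. -/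
lemma walk_oddSet (u v : C.verts) (p : C.coe.Walk u v) :
    ∃ D ⊆ C.edgeSet, oddSet D = ({u.val} : Set V) ∆ {v.val} := by
  induction p with
  | nil => exact ⟨∅, Set.empty_subset _, by rw [oddSet_empty, symmDiff_self]; exact Set.bot_eq_empty.symm⟩
  | @cons a b c h p ih =>
    obtain ⟨D', hD'sub, hD'odd⟩ := ih
    have hadj : C.Adj a.val b.val := h
    refine ⟨({s(a.val, b.val)} : Set (Sym2 V)) ∆ D', ?_, ?_⟩
    · intro e he
      rcases Set.mem_symmDiff.mp he with ⟨he, _⟩ | ⟨he, _⟩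
      · rcases he with rfl
        exact SimpleGraph.Subgraph.mem_edgeSet.mpr hadj
      · exact hD'sub he
    · rw [oddSet_symmDiff, oddSet_single hadj.ne, hD'odd]
      have : ({a.val, b.val} : Set V) = {a.val} ∆ {b.val} := by
        rw [Set.symmDiff_def]
        ext x
        simp only [Set.mem_insert_iff, Set.mem_singleton_iff, Set.mem_union, Set.mem_diff]
        constructor
        · rintro (rfl | rfl)
          · exact Or.inl ⟨rfl, fun hx => hadj.ne hx⟩
          · exact Or.inr ⟨rfl, fun hx => hadj.ne hx.symm⟩
        · tauto
      rw [this, symmDiff_assoc, ← symmDiff_assoc ({b.val} : Set V), symmDiff_self,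
        bot_symmDiff]

/-- In a connected subgraph, any even subset of the vertices is the odd-incidence set of
some set of edges of the subgraph. -/
lemma exists_correction (hconn : C.Connected) :
    ∀ n (T : Set V), T.ncard = n → T ⊆ C.verts → Even T.ncard →
      ∃ D ⊆ C.edgeSet, oddSet D = T := by
  intro n
  induction n using Nat.strong_induction_on with
  | _ n ih =>
    intro T hcard hTsub hTeven
    rcases Set.eq_empty_or_nonempty T with rfl | ⟨u, hu⟩
    · exact ⟨∅, Set.empty_subset _, oddSet_empty⟩
    · have hTfin : T.Finite := Set.toFinite T
      have h1 : 0 < T.ncard := (Set.ncard_pos (Set.toFinite T)).mpr ⟨u, hu⟩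
      have h2 : 2 ≤ T.ncard := by
        rcases hTeven with ⟨k, hk⟩; omega
      obtain ⟨v, hv, hvu⟩ : ∃ v ∈ T, v ≠ u := by
        by_contra hcon
        push_neg at hcon
        have : T = {u} := Set.eq_singleton_iff_unique_mem.mpr ⟨hu, hcon⟩
        rw [this, Set.ncard_singleton] at h2; omega
      obtain ⟨p⟩ := hconn.preconnected ⟨u, hTsub hu⟩ ⟨v, hTsub hv⟩
      obtain ⟨D₁, hD₁sub, hD₁odd⟩ := walk_oddSet _ _ p
      set T' := T \ {u, v} with hT'
      have hT'sub : T' ⊆ C.verts := fun x hx => hTsub hx.1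
      have huv : ({u, v} : Set V) ⊆ T := by
        rintro x (rfl | rfl) <;> assumption
      have hpair : ({u, v} : Set V).ncard = 2 := Set.ncard_pair (Ne.symm hvu)
      have hT'card : T'.ncard = T.ncard - 2 := by
        rw [hT', Set.ncard_diff huv, hpair]
      have hlt : T'.ncard < n := by omega
      have hT'even : Even T'.ncard := by
        rcases hTeven with ⟨k, hk⟩
        exact ⟨k - 1, by omega⟩
      obtain ⟨D₂, hD₂sub, hD₂odd⟩ := ih T'.ncard hlt T' rfl hT'sub hT'even
      refine ⟨D₁ ∆ D₂, ?_, ?_⟩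
      · intro e he
        rcases Set.mem_symmDiff.mp he with ⟨he, _⟩ | ⟨he, _⟩
        exacts [hD₁sub he, hD₂sub he]
      · rw [oddSet_symmDiff, hD₁odd, hD₂odd]
        have h12 : ({u} : Set V) ∆ {v} = {u, v} := by
          rw [Set.symmDiff_def]
          ext x
          simp only [Set.mem_union, Set.mem_diff, Set.mem_singleton_iff, Set.mem_insert_iff]
          constructor
          · tauto
          · rintro (rfl | rfl)
            · exact Or.inl ⟨rfl, Ne.symm hvu⟩
            · exact Or.inr ⟨rfl, hvu⟩
        rw [h12]
        have hdisj : Disjoint ({u, v} : Set V) T' := Set.disjoint_sdiff_right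
        rw [hdisj.symmDiff_eq_sup]
        exact Set.union_diff_cancel huv

/-- Handshake parity: the odd-incidence set of a set of non-diagonal edges has even
cardinality. -/
lemma oddSet_even (D : Set (Sym2 V)) (hD : ∀ e ∈ D, ¬ e.IsDiag) :
    Even (oddSet D).ncard := by
  have key : ∀ n (D : Set (Sym2 V)), D.ncard = n → (∀ e ∈ D, ¬ e.IsDiag) →
      Even (oddSet D).ncard := by
    intro n
    induction n using Nat.strong_induction_on with
    | _ n ih =>
      intro D hcard hDnd
      rcases Set.eq_empty_or_nonempty D with rfl | ⟨e, he⟩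
      · rw [oddSet_empty]; simp
      · obtain ⟨a, b⟩ := e
        have hab : a ≠ b := by
          intro h; exact hDnd _ he (by simp [h])
        have hsplit : D = ({s(a,b)} : Set (Sym2 V)) ∆ (D \ {s(a,b)}) := by
          rw [(Set.disjoint_sdiff_right).symmDiff_eq_sup]
          simp only [Set.sup_eq_union]
          rw [Set.union_diff_cancel (by simpa using he)]
        have hlt : (D \ {s(a,b)}).ncard < n :=
          hcard ▸ Set.ncard_diff_singleton_lt_of_mem he (Set.toFinite D)
        have hrest : Even (oddSet (D \ {s(a,b)})).ncard :=
          ih _ hlt _ rfl (fun e' he' => hDnd e' he'.1)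
        rw [hsplit, oddSet_symmDiff, oddSet_single hab]
        have hmod := ncard_symmDiff_mod ({a, b} : Set V) (oddSet (D \ {s(a,b)}))
        rw [Nat.even_iff]
        rw [Nat.even_iff] at hrest
        have hpair : ({a, b} : Set V).ncard = 2 := Set.ncard_pair hab
        omega
  exact key D.ncard D rfl hD

lemma syndrome_eq (Vbulk : Set V) (D : Set (Sym2 V)) :
    syndrome Vbulk D = oddSet D ∩ Vbulk := by
  ext v; simp [syndrome, oddSet]; tauto

end aux

/-- Cluster activity criterion: a connected cluster `C` is active (admits no
internal correction) iff it has an odd number of defects and touches no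
boundary. -/
theorem cluster_activity {V : Type*} [Fintype V]
    (G : SimpleGraph V) (Vbulk Vboundary : Set V)
    (hdisj : Disjoint Vbulk Vboundary) (hcover : Vbulk ∪ Vboundary = Set.univ)
    (C : G.Subgraph) (hconn : C.Connected)
    (S : Set V) (hS : S ⊆ Vbulk) :
    (¬ ∃ D ⊆ C.edgeSet, syndrome Vbulk D = S ∩ C.verts) ↔
      (Odd (S ∩ C.verts).ncard ∧ C.verts ∩ Vboundary = ∅) := by
  constructor
  · -- contrapositive
    intro hno
    by_contra hcon
    apply hno
    rcases Nat.even_or_odd (S ∩ C.verts).ncard with heven | hodd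
    · -- even number of defects: correct them internally
      obtain ⟨D, hDsub, hDodd⟩ := exists_correction hconn (S ∩ C.verts).ncard
        (S ∩ C.verts) rfl Set.inter_subset_right heven
      refine ⟨D, hDsub, ?_⟩
      rw [syndrome_eq, hDodd]
      exact Set.inter_eq_left.mpr fun x hx => hS hx.1
    · -- a boundary vertex exists: route the leftover defect to the boundary
      have hbnd : C.verts ∩ Vboundary ≠ ∅ := fun h => hcon ⟨hodd, h⟩
      obtain ⟨b, hbC, hbB⟩ := Set.nonempty_iff_ne_empty.mpr hbnd
      have hbnotbulk : b ∉ Vbulk := fun h => hdisj.ne_of_mem h hbB rfl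
      have hbnotS : b ∉ S ∩ C.verts := fun h => hbnotbulk (hS h.1)
      set T := insert b (S ∩ C.verts) with hT
      have hTsub : T ⊆ C.verts := by
        rintro x (rfl | hx)
        · exact hbC
        · exact hx.2
      have hTcard : T.ncard = (S ∩ C.verts).ncard + 1 :=
        Set.ncard_insert_of_notMem hbnotS (Set.toFinite _)
      have hTeven : Even T.ncard := by
        rw [hTcard]
        rcases hodd with ⟨k, hk⟩
        exact ⟨k + 1, by omega⟩
      obtain ⟨D, hDsub, hDodd⟩ := exists_correction hconn T.ncard T rfl hTsub hTeven
      refine ⟨D, hDsub, ?_⟩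
      rw [syndrome_eq, hDodd, hT]
      ext x
      simp only [Set.mem_inter_iff, Set.mem_insert_iff]
      constructor
      · rintro ⟨rfl | hx, hxb⟩
        · exact absurd hxb hbnotbulk
        · exact hx
      · intro hx
        exact ⟨Or.inr hx, hS hx.1⟩
  · -- if odd and no boundary, no correction exists
    rintro ⟨hodd, hbnd⟩ ⟨D, hDsub, hDsyn⟩
    have hCbulk : C.verts ⊆ Vbulk := by
      intro x hx
      have : x ∈ Vbulk ∪ Vboundary := hcover ▸ Set.mem_univ x
      rcases this with h | h
      · exact h
      · exact absurd (Set.mem_inter hx h) (by rw [hbnd]; exact id)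
    have hnd : ∀ e ∈ D, ¬ e.IsDiag := by
      intro e he
      have := hDsub he
      obtain ⟨a, b⟩ := e
      have hadj : C.Adj a b := SimpleGraph.Subgraph.mem_edgeSet.mp this
      simpa using hadj.ne
    have hoddsub : oddSet D ⊆ Vbulk := by
      intro v hv
      have hne : {e ∈ D | v ∈ e}.Nonempty := by
        rw [Set.nonempty_iff_ne_empty]
        intro h
        rw [oddSet, Set.mem_setOf_eq, h, Set.ncard_empty] at hv
        exact (Nat.not_odd_iff_even.mpr Even.zero) hv
      obtain ⟨e, heD, hve⟩ := hne
      have heC := hDsub heD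
      obtain ⟨a, b⟩ := e
      have hadj : C.Adj a b := SimpleGraph.Subgraph.mem_edgeSet.mp heC
      rcases Sym2.mem_iff.mp hve with rfl | rfl
      · exact hCbulk (C.edge_vert hadj)
      · exact hCbulk (C.edge_vert hadj.symm)
    have : syndrome Vbulk D = oddSet D := by
      rw [syndrome_eq]
      exact Set.inter_eq_left.mpr hoddsub
    rw [this] at hDsyn
    have := oddSet_even D hnd
    rw [hDsyn] at this
    exact (Nat.not_odd_iff_even.mpr this) hodd
end
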